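/- Let k ≥ 1 be a natural number, let L be a list of unordered pairs of vertices of a finite vertex type V, let H = greedy(k, L), and let L₁ be the subsequence of L consisting of exactly those entries of L that are edges of H (taken in the order they appear in L). Then for every list L₂ of unordered pairs of vertices, every edge of H is an edge of greedy(k, L₁ ++ L₂); i.e., H is a subgraph of greedy(k, L₁ ++ L₂). -/

import Mathlib

/-- The greedy spanner construction: process the entries of `L` in order, starting from the
empty graph, adding an entry `{u,v}` as an edge iff the extended distance between `u` and `v`
in the graph built so far is at least `2k`. -/
noncomputable def greedy {V : Type*} (k : ℕ) (L : List (Sym2 V)) : SimpleGraph V :=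
  L.foldl (fun H e =>
    if (2 * k : ℕ∞) ≤ Sym2.lift ⟨H.edist, fun _ _ => H.edist_comm⟩ e
    then H ⊔ SimpleGraph.fromEdgeSet {e} else H) ⊥


/-- The subsequence of `L` consisting of exactly those entries that are edges of
`greedy k L`, in the order they appear in `L`. -/
noncomputable def greedyKept {V : Type*} (k : ℕ) (L : List (Sym2 V)) : List (Sym2 V) :=
  L.filter (fun e => @decide (e ∈ (greedy k L).edgeSet) (Classical.propDecidable _))

/-!
Processing an entry either leaves the graph unchanged or makes that entry an edge, and the
graph only grows afterwards. Hence every entry that is not an edge of `greedy k L` was a no-op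
when it was processed, and deleting all of them gives the same graph:
`greedy k (greedyKept k L) = greedy k L`. Appending `L₂` can then only add edges.
-/

namespace SimpleGraph

variable {V : Type*}

lemma sup_fromEdgeSet_singleton_eq_self {G : SimpleGraph V} {e : Sym2 V}
    (he : e ∉ (G ⊔ fromEdgeSet {e}).edgeSet) : G ⊔ fromEdgeSet {e} = G := by
  refine sup_eq_left.mpr (edgeSet_subset_edgeSet.mp fun d hd => ?_)
  obtain ⟨rfl, -⟩ : d ∈ ({e} : Set (Sym2 V)) \ Sym2.diagSet := by
    rwa [← edgeSet_fromEdgeSet]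
  exact absurd (Or.inr hd) (by rwa [edgeSet_sup] at he)

end SimpleGraph

open SimpleGraph

section Greedy

variable {V : Type*} (k : ℕ)

noncomputable def greedyStep (G : SimpleGraph V) (e : Sym2 V) : SimpleGraph V :=
  if (2 * k : ℕ∞) ≤ Sym2.lift ⟨G.edist, fun _ _ => G.edist_comm⟩ e
  then G ⊔ fromEdgeSet {e} else G

lemma greedy_eq_foldl (L : List (Sym2 V)) : greedy k L = L.foldl (greedyStep k) ⊥ := rfl

lemma le_greedyStep (G : SimpleGraph V) (e : Sym2 V) : G ≤ greedyStep k G e := by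
  unfold greedyStep
  split
  · exact le_sup_left
  · exact le_rfl

lemma le_foldl_greedyStep (L : List (Sym2 V)) (G : SimpleGraph V) :
    G ≤ L.foldl (greedyStep k) G := by
  induction L generalizing G with
  | nil => exact le_rfl
  | cons e L ih => exact (le_greedyStep k G e).trans (ih _)

lemma greedyStep_eq_self_of_not_mem {G : SimpleGraph V} {e : Sym2 V}
    (he : e ∉ (greedyStep k G e).edgeSet) : greedyStep k G e = G := by
  by_cases h : (2 * k : ℕ∞) ≤ Sym2.lift ⟨G.edist, fun _ _ => G.edist_comm⟩ e
  · rw [greedyStep, if_pos h] at he ⊢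
    exact sup_fromEdgeSet_singleton_eq_self he
  · rw [greedyStep, if_neg h]

lemma foldl_greedyStep_filter (p : Sym2 V → Bool) (L : List (Sym2 V)) (G : SimpleGraph V)
    (hp : ∀ e ∈ (L.foldl (greedyStep k) G).edgeSet, p e = true) :
    (L.filter p).foldl (greedyStep k) G = L.foldl (greedyStep k) G := by
  induction L generalizing G with
  | nil => rfl
  | cons e L ih =>
    rw [List.foldl_cons] at hp ⊢
    by_cases hpe : p e = true
    · rw [List.filter_cons_of_pos hpe, List.foldl_cons]
      exact ih _ hp
    · have hnot : e ∉ (greedyStep k G e).edgeSet := fun he =>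
        hpe (hp e (edgeSet_mono (le_foldl_greedyStep k L _) he))
      rw [greedyStep_eq_self_of_not_mem k hnot] at hp ⊢
      rw [List.filter_cons_of_neg hpe]
      exact ih G hp

lemma greedy_le_greedy_append (L₁ L₂ : List (Sym2 V)) :
    greedy k L₁ ≤ greedy k (L₁ ++ L₂) := by
  rw [greedy_eq_foldl, greedy_eq_foldl, List.foldl_append]
  exact le_foldl_greedyStep k L₂ _

lemma greedy_greedyKept (L : List (Sym2 V)) : greedy k (greedyKept k L) = greedy k L :=
  foldl_greedyStep_filter k _ L ⊥ fun _ he =>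
    @decide_eq_true _ (Classical.propDecidable _) he

end Greedy

theorem greedy_kept_append_general {V : Type*} (k : ℕ) (L L₂ : List (Sym2 V)) :
    greedy k L ≤ greedy k (greedyKept k L ++ L₂) := by
  calc greedy k L = greedy k (greedyKept k L) := (greedy_greedyKept k L).symm
    _ ≤ greedy k (greedyKept k L ++ L₂) := greedy_le_greedy_append k _ L₂

/-- for any list `L₂`, every edge of `greedy k L` is an edge of
`greedy k (L₁ ++ L₂)`, where `L₁` is the subsequence of entries kept by `greedy k L`. -/
theorem greedy_kept_append {V : Type*} (k : ℕ) (hk : 1 ≤ k) (L L₂ : List (Sym2 V)) :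
    greedy k L ≤ greedy k (greedyKept k L ++ L₂) :=
  greedy_kept_append_general k L L₂
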